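/- arXiv:2410.23457 — 3 statements merged into one kernel-verified Lean document; each statement's English description precedes it below -/
import Mathlib

section
/- Let U be an open subset of ℝⁿ, k ≥ 1 an integer, H : ℝⁿ → ℝ a nonzero affine-linear function, and f : U → ℝ a C^k function vanishing identically on H⁻¹(0) ∩ U. Then the quotient f/H : U \ H⁻¹(0) → ℝ extends to a C^(k-1) function on U. -/
/-!
Write `H = ℓ + b` and pick `e` with `ℓ e = 1`. If `f` vanishes on `{H = 0}`, the fundamental
theorem of calculus along the segment from `x - H x • e ∈ {H = 0}` to `x` gives Hadamard's formula
`f x = H x • ∫₀¹ Df(x + ((t - 1) H x) • e) e dt`, and differentiating under the integral sign shows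
that the integral is `C^k` when `f` is `C^(k+1)`. The segment may leave `U`, so the formula is
applied to `χ • f` for a bump function `χ` that is `1` near a given point; the quotient is then
`f / H` off the hyperplane and `Df(x) e` on it, independently of `χ`.
-/

open Set Function Filter Topology Metric

section ParametricIntegral

variable {E G : Type*} [NormedAddCommGroup E] [NormedSpace ℝ E] [FiniteDimensional ℝ E]
  [NormedAddCommGroup G] [NormedSpace ℝ G] {F : E → ℝ → G} {a b : ℝ}

theorem hasFDerivAt_intervalIntegral_of_contDiff_uncurry (hF : ContDiff ℝ 1 (uncurry F))
    (x₀ : E) :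
    HasFDerivAt (fun x => ∫ t in a..b, F x t)
      (∫ t in a..b, fderiv ℝ (uncurry F) (x₀, t) ∘L ContinuousLinearMap.inl ℝ E ℝ) x₀ := by
  set F' : E → ℝ → E →L[ℝ] G := fun x t => fderiv ℝ (uncurry F) (x, t) ∘L .inl ℝ E ℝ
  have hF'_cont : Continuous (uncurry F') :=
    (hF.continuous_fderiv one_ne_zero).clm_comp continuous_const
  obtain ⟨C, hC⟩ := ((isCompact_closedBall x₀ 1).prod isCompact_uIcc).exists_bound_of_continuousOn
    hF'_cont.continuousOn
  refine intervalIntegral.hasFDerivAt_integral_of_dominated_of_fderiv_le (bound := fun _ => C)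
    (ball_mem_nhds x₀ one_pos)
    (Eventually.of_forall fun x => (hF.continuous.comp (.prodMk_right x)).aestronglyMeasurable)
    ((hF.continuous.comp (.prodMk_right x₀)).intervalIntegrable a b)
    (hF'_cont.comp (.prodMk_right x₀)).aestronglyMeasurable ?_ intervalIntegrable_const ?_
  · filter_upwards with t ht x hx
    exact hC (x, t) ⟨ball_subset_closedBall hx, uIoc_subset_uIcc ht⟩
  · filter_upwards with t _ x _
    exact ((hF.differentiable one_ne_zero (x, t)).hasFDerivAt).comp x
      (hasFDerivAt_prodMk_left x t)

theorem contDiff_intervalIntegral_of_contDiff_uncurry [CompleteSpace G] {m : ℕ}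
    (hF : ContDiff ℝ m (uncurry F)) :
    ContDiff ℝ m (fun x => ∫ t in a..b, F x t) := by
  induction m generalizing F with
  | zero => exact contDiff_zero.2 <|
      intervalIntegral.continuous_parametric_intervalIntegral_of_continuous' hF.continuous a b
  | succ m ih =>
    have hF1 : ContDiff ℝ 1 (uncurry F) := hF.of_le (by exact_mod_cast Nat.le_add_left 1 m)
    have hDF : ContDiff ℝ m (fderiv ℝ (uncurry F)) := hF.fderiv_right (by push_cast; rfl)
    push_cast
    refine contDiff_succ_iff_fderiv_apply.2 ⟨fun x =>
      (hasFDerivAt_intervalIntegral_of_contDiff_uncurry hF1 x).differentiableAt, by simp,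
      fun y => ?_⟩
    have hderiv : ∀ x, fderiv ℝ (fun x => ∫ t in a..b, F x t) x y =
        ∫ t in a..b, fderiv ℝ (uncurry F) (x, t) (y, 0) := fun x => by
      rw [(hasFDerivAt_intervalIntegral_of_contDiff_uncurry hF1 x).fderiv,
        ContinuousLinearMap.intervalIntegral_apply]
      · rfl
      · exact (((hF1.continuous_fderiv one_ne_zero).comp (.prodMk_right x)).clm_comp
          continuous_const).intervalIntegrable a b
    simp only [hderiv]
    exact ih (hDF.clm_apply contDiff_const)

end ParametricIntegral

section Hadamard

variable {E F : Type*} [NormedAddCommGroup E] [NormedSpace ℝ E]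
  [NormedAddCommGroup F] [NormedSpace ℝ F] [CompleteSpace F]
  (ℓ : E →L[ℝ] ℝ) (b : ℝ) (e : E) (f : E → F)

noncomputable def hadamardQuotient (x : E) : F :=
  ∫ t in (0 : ℝ)..1, fderiv ℝ f (x + ((t - 1) * (ℓ x + b)) • e) e

theorem hadamardQuotient_of_eq_zero {x : E} (hx : ℓ x + b = 0) :
    hadamardQuotient ℓ b e f x = fderiv ℝ f x e := by
  simp [hadamardQuotient, hx]

theorem contDiff_hadamardQuotient [FiniteDimensional ℝ E] {k : ℕ}
    (hf : ContDiff ℝ (k + 1) f) : ContDiff ℝ k (hadamardQuotient ℓ b e f) := by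
  refine contDiff_intervalIntegral_of_contDiff_uncurry (F := fun x t => fderiv ℝ f _ e) ?_
  have hpath : ContDiff ℝ k fun p : E × ℝ => p.1 + ((p.2 - 1) * (ℓ p.1 + b)) • e := by fun_prop
  exact ((hf.fderiv_right le_rfl).comp hpath).clm_apply contDiff_const

theorem smul_hadamardQuotient (hℓe : ℓ e = 1) (hf : ContDiff ℝ 1 f)
    (hvanish : ∀ x, ℓ x + b = 0 → f x = 0) (x : E) :
    (ℓ x + b) • hadamardQuotient ℓ b e f x = f x := by
  set path : ℝ → E := fun t => x + ((t - 1) * (ℓ x + b)) • e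
  have hpath : ∀ t, HasDerivAt path ((ℓ x + b) • e) t := fun t => by
    convert ((((hasDerivAt_id t).sub_const 1).mul_const (ℓ x + b)).smul_const e).const_add x
      using 1 <;> simp [path]
  have hderiv : ∀ t ∈ uIcc (0 : ℝ) 1,
      HasDerivAt (f ∘ path) ((ℓ x + b) • fderiv ℝ f (path t) e) t := fun t _ => by
    simpa using ((hf.differentiable one_ne_zero (path t)).hasFDerivAt).comp_hasDerivAt t (hpath t)
  have hcont : Continuous fun t => fderiv ℝ f (path t) e :=
    ((hf.continuous_fderiv one_ne_zero).comp
      (continuous_iff_continuousAt.2 fun t => (hpath t).continuousAt)).clm_apply continuous_const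
  have hstart : f (path 0) = 0 := hvanish _ (by simp [path, hℓe])
  rw [hadamardQuotient, ← intervalIntegral.integral_smul,
    intervalIntegral.integral_eq_sub_of_hasDerivAt hderiv
      ((continuous_const.smul hcont).intervalIntegrable 0 1)]
  simp only [comp_apply, hstart, sub_zero]
  simp [path]

end Hadamard

theorem ContDiffOn.contDiff_smul_of_tsupport_subset {E F : Type*} [NormedAddCommGroup E]
    [NormedSpace ℝ E] [NormedAddCommGroup F] [NormedSpace ℝ F] {U : Set E} {n : WithTop ℕ∞}
    {f : E → F} {χ : E → ℝ} (hU : IsOpen U) (hf : ContDiffOn ℝ n f U) (hχ : ContDiff ℝ n χ)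
    (hχU : tsupport χ ⊆ U) : ContDiff ℝ n (χ • f) := by
  refine contDiff_iff_contDiffAt.2 fun y => ?_
  by_cases hy : y ∈ U
  · exact hχ.contDiffAt.smul (hf.contDiffAt (hU.mem_nhds hy))
  · have hχy : χ =ᶠ[𝓝 y] 0 := notMem_tsupport_iff_eventuallyEq.1 fun h => hy (hχU h)
    exact (contDiffAt_const (c := (0 : F))).congr_of_eventuallyEq
      (hχy.mono fun z hz => by simp [hz])

theorem ContDiffOn.exists_contDiffOn_eq_inv_affine_smul {E F : Type*} [NormedAddCommGroup E]
    [NormedSpace ℝ E] [FiniteDimensional ℝ E] [NormedAddCommGroup F] [NormedSpace ℝ F]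
    [CompleteSpace F] {U : Set E} (hU : IsOpen U) {k : ℕ} {f : E → F}
    (hf : ContDiffOn ℝ (k + 1) f U) (ℓ : E →L[ℝ] ℝ) (b : ℝ)
    (hvanish : ∀ x ∈ U, ℓ x + b = 0 → f x = 0) :
    ∃ g : E → F, ContDiffOn ℝ k g U ∧ ∀ x ∈ U, ℓ x + b ≠ 0 → g x = (ℓ x + b)⁻¹ • f x := by
  rcases eq_or_ne ℓ 0 with rfl | hℓ
  · exact ⟨fun x => b⁻¹ • f x, (hf.of_le le_self_add).const_smul _, fun x _ _ => by simp⟩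
  obtain ⟨v, hv⟩ := ℓ.exists_ne_zero hℓ
  set e := (ℓ v)⁻¹ • v
  have hℓe : ℓ e = 1 := by simp [e, hv]
  classical
  refine ⟨fun x => if ℓ x + b = 0 then fderiv ℝ f x e else (ℓ x + b)⁻¹ • f x,
    fun x₀ hx₀ => ContDiffAt.contDiffWithinAt ?_, fun x _ hx => if_neg hx⟩
  obtain ⟨r, hr, hball⟩ := isOpen_iff.1 hU x₀ hx₀
  let χ : ContDiffBump x₀ := ⟨r / 4, r / 2, by positivity, by linarith⟩
  have hχU : tsupport χ ⊆ U := by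
    rw [χ.tsupport_eq]
    exact (closedBall_subset_ball (by simp [χ]; linarith)).trans hball
  have hχf : ContDiff ℝ (k + 1) (⇑χ • f) := hf.contDiff_smul_of_tsupport_subset hU χ.contDiff hχU
  have hχf_vanish : ∀ x, ℓ x + b = 0 → (⇑χ • f) x = 0 := fun x hx => by
    by_cases hxU : x ∈ U
    · simp [hvanish x hxU hx]
    · simp [image_eq_zero_of_notMem_tsupport fun h => hxU (hχU h)]
  refine (contDiff_hadamardQuotient ℓ b e _ hχf).contDiffAt.congr_of_eventuallyEq ?_
  have hχ_one : (⇑χ • f) =ᶠ[𝓝 x₀] f :=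
    χ.eventuallyEq_one.mono fun y hy => by simp [hy]
  filter_upwards [eventually_eventuallyEq_nhds.2 hχ_one] with y hy
  by_cases hy0 : ℓ y + b = 0
  · rw [if_pos hy0, hadamardQuotient_of_eq_zero ℓ b e _ hy0, hy.fderiv_eq]
  · rw [if_neg hy0, ← hy.self_of_nhds, inv_smul_eq_iff₀ hy0,
      smul_hadamardQuotient ℓ b e _ hℓe (hχf.of_le le_add_self) hχf_vanish]

theorem affine_division_general {n : ℕ} (U : Set (Fin n → ℝ)) (hU : IsOpen U)
    (k : ℕ) (hk : 1 ≤ k)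
    (a : Fin n → ℝ) (b : ℝ)
    (H : (Fin n → ℝ) → ℝ) (hH : ∀ x, H x = (∑ i, a i * x i) + b)
    (f : (Fin n → ℝ) → ℝ) (hf : ContDiffOn ℝ k f U)
    (hvanish : ∀ x ∈ U, H x = 0 → f x = 0) :
    ∃ g : (Fin n → ℝ) → ℝ, ContDiffOn ℝ (k - 1 : ℕ) g U ∧
      ∀ x ∈ U, H x ≠ 0 → g x = f x / H x := by
  obtain ⟨m, rfl⟩ : ∃ m, k = m + 1 := ⟨k - 1, by omega⟩
  let ℓ : (Fin n → ℝ) →L[ℝ] ℝ := ∑ i, a i • ContinuousLinearMap.proj i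
  have hH' : ∀ x, H x = ℓ x + b := fun x => by simp [ℓ, hH]
  obtain ⟨g, hg, hgH⟩ := ContDiffOn.exists_contDiffOn_eq_inv_affine_smul hU
    (by exact_mod_cast hf) ℓ b fun x hx hx0 => hvanish x hx (by rwa [hH'])
  refine ⟨g, by simpa using hg, fun x hx hx0 => ?_⟩
  rw [hgH x hx (by rwa [← hH']), ← hH', smul_eq_mul, div_eq_inv_mul]

/-- If `f` is `C^k` (`k ≥ 1`) on an open `U ⊆ ℝⁿ` and vanishes on
`H⁻¹(0) ∩ U` for a nonzero affine-linear function `H`, then `f / H` extends to a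
`C^(k-1)` function on `U`. -/
theorem affine_division {n : ℕ} (U : Set (Fin n → ℝ)) (hU : IsOpen U)
    (k : ℕ) (hk : 1 ≤ k)
    (a : Fin n → ℝ) (b : ℝ) (hab : a ≠ 0 ∨ b ≠ 0)
    (H : (Fin n → ℝ) → ℝ) (hH : ∀ x, H x = (∑ i, a i * x i) + b)
    (f : (Fin n → ℝ) → ℝ) (hf : ContDiffOn ℝ k f U)
    (hvanish : ∀ x ∈ U, H x = 0 → f x = 0) :
    ∃ g : (Fin n → ℝ) → ℝ, ContDiffOn ℝ (k - 1 : ℕ) g U ∧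
      ∀ x ∈ U, H x ≠ 0 → g x = f x / H x :=
  affine_division_general U hU k hk a b H hH f hf hvanish
end

section
/- Let A, B be nonempty closed convex semilinear (polyhedral) subsets of ℝⁿ with A ∩ B ≠ ∅, and let Ω be a bounded subset of ℝⁿ. Then there exists a constant ε > 0 such that dist(x, A) + dist(x, B) ≥ ε · dist(x, A ∩ B) for all x ∈ Ω. -/
/-!
Each distance controls the residuals of the constraints defining its set: if every `y ∈ A`
satisfies `⟪a, y⟫ ≤ β`, then `(⟪a, x⟫ - β)⁺ ≤ ‖a‖ · dist(x, A)`. So it suffices to bound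
`dist(x, A ∩ B)` by a multiple of the total residual of the constraints of `A ∩ B`, which is
Hoffman's error bound for a polyhedron `P`.

Let `v` be the projection of `x` onto `P`. Then `x - v` lies in the normal cone of `P` at `v`,
which by Farkas' lemma is generated by the normals `aᵢ` of the constraints active at `v`, and by
the conic Carathéodory theorem already by a linearly independent family of them. Writing
`x - v = ∑ cᵢ aᵢ` with `cᵢ ≥ 0`, we get `‖x - v‖² = ∑ cᵢ (⟪aᵢ, x⟫ - bᵢ)`, and linear independence
gives `cᵢ ≤ K ‖x - v‖`, whence `‖x - v‖ ≤ K · residual`. There are only finitely many linearly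
independent subfamilies, so `K` can be taken uniform in `x`.
-/

open Finset Filter Topology
open scoped InnerProductSpace

theorem LinearIndependent.exists_norm_le_mul_norm_sum {κ E : Type*} [Fintype κ]
    [NormedAddCommGroup E] [NormedSpace ℝ E] {v : κ → E} (hv : LinearIndependent ℝ v) :
    ∃ K : NNReal, ∀ c : κ → ℝ, ‖c‖ ≤ K * ‖∑ i, c i • v i‖ := by
  obtain ⟨K, -, hK⟩ := (Fintype.linearCombination ℝ v).injective_iff_antilipschitz.1
    hv.fintypeLinearCombination_injective
  exact ⟨K, fun c => by
    simpa [Fintype.linearCombination_apply] using ZeroHomClass.bound_of_antilipschitz _ hK c⟩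

variable {ι E : Type*} [NormedAddCommGroup E] [InnerProductSpace ℝ E]

namespace PointedCone

section Caratheodory

variable {M : Type*} [AddCommGroup M] [Module ℝ M] {a : ι → M} {s : Finset ι} {v : M}

theorem mem_hull_image_finset_iff :
    v ∈ hull ℝ (a '' s) ↔ ∃ c : ι → ℝ, (∀ i ∈ s, 0 ≤ c i) ∧ ∑ i ∈ s, c i • a i = v := by
  rw [hull, Submodule.mem_span_image_finset_iff_exists_fun']
  constructor
  · rintro ⟨c, rfl⟩
    exact ⟨fun i => c i, fun i _ => (c i).2, rfl⟩
  · rintro ⟨c, hc, rfl⟩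
    refine ⟨fun i => ⟨max (c i) 0, le_max_right _ _⟩, sum_congr rfl fun i hi => ?_⟩
    simp [Nonneg.mk_smul, max_eq_left (hc i hi)]

theorem coe_hull_image_finset_eq_image (s : Finset ι) :
    (hull ℝ (a '' s) : Set M) =
      Fintype.linearCombination ℝ (fun i : s => a i) '' {c | ∀ i, 0 ≤ c i} := by
  classical
  ext v
  simp only [SetLike.mem_coe, mem_hull_image_finset_iff, Set.mem_image, Set.mem_ofPred_eq,
    Fintype.linearCombination_apply]
  constructor
  · rintro ⟨c, hc, rfl⟩
    exact ⟨fun i => c i, fun i => hc i i.2, sum_coe_sort s fun i => c i • a i⟩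
  · rintro ⟨c, hc, rfl⟩
    refine ⟨fun i => if h : i ∈ s then c ⟨i, h⟩ else 0, fun i hi => by simp [hi, hc], ?_⟩
    rw [← sum_coe_sort]
    simp

theorem exists_mem_hull_image_erase_of_sum_smul_eq_zero [DecidableEq ι] {g : ι → ℝ}
    (hg : ∑ i ∈ s, g i • a i = 0) (hpos : ∃ i ∈ s, 0 < g i) (hv : v ∈ hull ℝ (a '' s)) :
    ∃ i₀ ∈ s, v ∈ hull ℝ (a '' ↑(s.erase i₀)) := by
  obtain ⟨c, hc, rfl⟩ := mem_hull_image_finset_iff.1 hv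
  obtain ⟨i₀, hi₀, hmin⟩ := exists_min_image {i ∈ s | 0 < g i} (fun i => c i / g i)
    (by simpa [Finset.Nonempty] using hpos)
  obtain ⟨hi₀s, hgi₀⟩ := mem_filter.1 hi₀
  -- ratio test: moving along `g` until the first coefficient vanishes keeps the others `≥ 0`
  set r := c i₀ / g i₀
  have hr : 0 ≤ r := div_nonneg (hc i₀ hi₀s) hgi₀.le
  have hcr : ∀ i ∈ s, 0 ≤ c i - r * g i := by
    intro i hi
    rcases le_or_gt (g i) 0 with hgi | hgi
    · nlinarith [hc i hi]
    · linarith [(le_div_iff₀ hgi).1 (hmin i (mem_filter.2 ⟨hi, hgi⟩))]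
  have hzero : c i₀ - r * g i₀ = 0 := by simp [r, div_mul_cancel₀ _ hgi₀.ne']
  have hsum : ∑ i ∈ s, (c i - r * g i) • a i = ∑ i ∈ s, c i • a i := by
    simp only [sub_smul, sum_sub_distrib, mul_smul, ← smul_sum, hg, smul_zero, sub_zero]
  refine ⟨i₀, hi₀s, mem_hull_image_finset_iff.2
    ⟨fun i => c i - r * g i, fun i hi => hcr i (mem_of_mem_erase hi), ?_⟩⟩
  rw [← hsum, ← add_sum_erase _ _ hi₀s, hzero, zero_smul, zero_add]

theorem exists_mem_hull_image_erase_of_not_linearIndependent [DecidableEq ι]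
    (hli : ¬LinearIndependent ℝ (fun i : s => a i)) (hv : v ∈ hull ℝ (a '' s)) :
    ∃ i₀ ∈ s, v ∈ hull ℝ (a '' ↑(s.erase i₀)) := by
  obtain ⟨g, hg, i₁, hi₁⟩ := Fintype.not_linearIndependent_iff.1 hli
  let g' : ι → ℝ := fun i => if h : i ∈ s then g ⟨i, h⟩ else 0
  have hg' : ∑ i ∈ s, g' i • a i = 0 := by
    rw [← sum_coe_sort, ← hg]
    exact sum_congr rfl fun i _ => by simp [g']
  have hi₁' : g' i₁ ≠ 0 := by simpa [g'] using hi₁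
  rcases hi₁'.lt_or_gt with hneg | hpos
  · refine exists_mem_hull_image_erase_of_sum_smul_eq_zero (g := -g') ?_ ⟨i₁, i₁.2, ?_⟩ hv
    · simp [neg_smul, sum_neg_distrib, hg']
    · simpa using hneg
  · exact exists_mem_hull_image_erase_of_sum_smul_eq_zero hg' ⟨i₁, i₁.2, hpos⟩ hv

/-- Conic Carathéodory theorem. -/
theorem exists_linearIndependent_of_mem_hull_image (hv : v ∈ hull ℝ (a '' s)) :
    ∃ t ⊆ s, LinearIndependent ℝ (fun i : t => a i) ∧ v ∈ hull ℝ (a '' t) := by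
  classical
  induction s using strongInduction with
  | H s ih =>
    by_cases hli : LinearIndependent ℝ (fun i : s => a i)
    · exact ⟨s, Subset.rfl, hli, hv⟩
    obtain ⟨i₀, hi₀, hv'⟩ := exists_mem_hull_image_erase_of_not_linearIndependent hli hv
    obtain ⟨t, hts, ht⟩ := ih _ (erase_ssubset hi₀) hv'
    exact ⟨t, hts.trans (erase_subset _ _), ht⟩

end Caratheodory

theorem isClosed_hull_image_finset {F : Type*} [NormedAddCommGroup F] [NormedSpace ℝ F]
    (a : ι → F) (s : Finset ι) : IsClosed (hull ℝ (a '' s) : Set F) := by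
  classical
  have hunion : (hull ℝ (a '' s) : Set F) =
      ⋃ t ∈ s.powerset.filter fun t : Finset ι => LinearIndependent ℝ (fun i : t => a i),
        (hull ℝ (a '' t) : Set F) := by
    ext v
    simp only [Set.mem_iUnion, mem_filter, mem_powerset, SetLike.mem_coe]
    constructor
    · intro hv
      obtain ⟨t, hts, hli, hvt⟩ := exists_linearIndependent_of_mem_hull_image hv
      exact ⟨t, ⟨hts, hli⟩, hvt⟩
    · rintro ⟨t, ⟨hts, -⟩, hvt⟩
      exact Submodule.span_mono (Set.image_mono (coe_subset.2 hts)) hvt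
  rw [hunion]
  refine (finite_toSet _).isClosed_biUnion fun t ht => ?_
  have hli := (mem_filter.1 ht).2
  rw [coe_hull_image_finset_eq_image]
  refine (LinearMap.isClosedEmbedding_of_injective ?_).isClosedMap _ ?_
  · exact LinearMap.ker_eq_bot.2 hli.fintypeLinearCombination_injective
  · simp only [Set.ofPred_forall]
    exact isClosed_iInter fun i => isClosed_le continuous_const (continuous_apply i)

/-- Farkas' lemma for a finitely generated cone. -/
theorem mem_hull_image_finset_of_forall_inner_le_zero [CompleteSpace E] {a : ι → E}
    {s : Finset ι} {v : E} (h : ∀ w, (∀ i ∈ s, ⟪a i, w⟫_ℝ ≤ 0) → ⟪v, w⟫_ℝ ≤ 0) :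
    v ∈ hull ℝ (a '' s) := by
  by_contra hv
  let C : ProperCone ℝ E := ⟨hull ℝ (a '' s), isClosed_hull_image_finset a s⟩
  obtain ⟨y, hy, hvy⟩ := C.hyperplane_separation' hv
  have := h (-y) fun i hi => by
    simpa [inner_neg_right] using hy (a i) (subset_hull (Set.mem_image_of_mem a hi))
  simp only [inner_neg_right] at this
  linarith

end PointedCone

theorem posPart_inner_sub_le_norm_mul_infDist {S : Set E} (hS : S.Nonempty) {a : E} {β : ℝ}
    (h : ∀ y ∈ S, ⟪a, y⟫_ℝ ≤ β) (x : E) : (⟪a, x⟫_ℝ - β)⁺ ≤ ‖a‖ * Metric.infDist x S := by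
  have : Nonempty S := hS.to_subtype
  rw [Metric.infDist_eq_iInf, Real.mul_iInf_of_nonneg (norm_nonneg a)]
  refine le_ciInf fun y => max_le ?_ (by positivity)
  calc ⟪a, x⟫_ℝ - β ≤ ⟪a, x - y⟫_ℝ := by rw [inner_sub_right]; linarith [h y y.2]
    _ ≤ ‖a‖ * dist x y := by rw [dist_eq_norm]; exact real_inner_le_norm _ _

def polyhedron (s : Finset ι) (a : ι → E) (b : ι → ℝ) : Set E :=
  {x | ∀ i ∈ s, ⟪a i, x⟫_ℝ ≤ b i}

section Polyhedron

variable {s : Finset ι} {a : ι → E} {b : ι → ℝ}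

theorem polyhedron_union [DecidableEq ι] (s t : Finset ι) (a : ι → E) (b : ι → ℝ) :
    polyhedron (s ∪ t) a b = polyhedron s a b ∩ polyhedron t a b := by
  ext x
  simp only [polyhedron, Set.mem_inter_iff, Set.mem_ofPred_eq, mem_union]
  exact ⟨fun h => ⟨fun i hi => h i (.inl hi), fun i hi => h i (.inr hi)⟩,
    fun h i hi => hi.elim (h.1 i) (h.2 i)⟩

theorem polyhedron_eq_biInter : polyhedron s a b = ⋂ i ∈ s, {x | ⟪a i, x⟫_ℝ ≤ b i} := by
  ext x
  simp [polyhedron]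

theorem convex_polyhedron : Convex ℝ (polyhedron s a b) := by
  rw [polyhedron_eq_biInter]
  exact convex_iInter₂ fun i _ => convex_halfSpace_le (innerₗ E (a i)).isLinear (b i)

theorem isClosed_polyhedron : IsClosed (polyhedron s a b) := by
  rw [polyhedron_eq_biInter]
  exact isClosed_biInter fun i _ => isClosed_le (continuous_const.inner continuous_id)
    continuous_const

theorem eventually_add_smul_mem_polyhedron {v w : E} (hv : v ∈ polyhedron s a b)
    (hw : ∀ i ∈ s, ⟪a i, v⟫_ℝ = b i → ⟪a i, w⟫_ℝ ≤ 0) :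
    ∀ᶠ t in 𝓝[>] (0 : ℝ), v + t • w ∈ polyhedron s a b := by
  refine (eventually_all_finset s).2 fun i hi => ?_
  simp only [inner_add_right, inner_smul_right]
  rcases (hv i hi).eq_or_lt with hact | hinact
  · filter_upwards [self_mem_nhdsWithin] with t (ht : 0 < t)
    nlinarith [hw i hi hact]
  · have hlim : Tendsto (fun t : ℝ => ⟪a i, v⟫_ℝ + t * ⟪a i, w⟫_ℝ) (𝓝 0) (𝓝 ⟪a i, v⟫_ℝ) :=
      Continuous.tendsto' (by fun_prop) _ _ (by simp)
    exact eventually_nhdsWithin_of_eventually_nhds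
      ((hlim.eventually_lt_const hinact).mono fun t ht => ht.le)

theorem mem_hull_active_of_forall_inner_sub_le_zero [CompleteSpace E] {u v : E}
    (hv : v ∈ polyhedron s a b) (hu : ∀ y ∈ polyhedron s a b, ⟪u, y - v⟫_ℝ ≤ 0) :
    u ∈ PointedCone.hull ℝ (a '' ↑({i ∈ s | ⟪a i, v⟫_ℝ = b i} : Finset ι)) := by
  refine PointedCone.mem_hull_image_finset_of_forall_inner_le_zero fun w hw => ?_
  obtain ⟨t, hwt, ht⟩ := ((eventually_add_smul_mem_polyhedron hv fun i hi hact =>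
    hw i (mem_filter.2 ⟨hi, hact⟩)).and self_mem_nhdsWithin).exists
  have := hu _ hwt
  rw [add_sub_cancel_left, real_inner_smul_right] at this
  exact nonpos_of_mul_nonpos_right this ht

theorem norm_sub_le_mul_sum_posPart {t : Finset ι} {K : NNReal} {x v : E}
    (hK : ∀ c : t → ℝ, ‖c‖ ≤ K * ‖∑ i, c i • a i‖) (hts : t ⊆ s)
    (hact : ∀ i ∈ t, ⟪a i, v⟫_ℝ = b i) (hxv : x - v ∈ PointedCone.hull ℝ (a '' t)) :
    ‖x - v‖ ≤ K * ∑ i ∈ s, (⟪a i, x⟫_ℝ - b i)⁺ := by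
  obtain ⟨c, hc, hcx⟩ := PointedCone.mem_hull_image_finset_iff.1 hxv
  set R := ∑ i ∈ s, (⟪a i, x⟫_ℝ - b i)⁺
  have hcK : ∀ i ∈ t, c i ≤ K * ‖x - v‖ := by
    intro i hi
    have := (norm_le_pi_norm (fun j : t => c j) ⟨i, hi⟩).trans (hK _)
    rw [sum_coe_sort t fun j => c j • a j, hcx, Real.norm_eq_abs] at this
    exact (le_abs_self _).trans this
  have hsq : ‖x - v‖ * ‖x - v‖ ≤ ‖x - v‖ * (K * R) := calc
    ‖x - v‖ * ‖x - v‖ = ∑ i ∈ t, c i * (⟪a i, x⟫_ℝ - b i) := by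
      rw [← real_inner_self_eq_norm_mul_norm]
      nth_rw 1 [← hcx]
      rw [sum_inner]
      refine sum_congr rfl fun i hi => ?_
      rw [real_inner_smul_left, inner_sub_right, hact i hi]
    _ ≤ ∑ i ∈ t, K * ‖x - v‖ * (⟪a i, x⟫_ℝ - b i)⁺ :=
      sum_le_sum fun i hi => (mul_le_mul_of_nonneg_left (le_posPart _) (hc i hi)).trans
        (mul_le_mul_of_nonneg_right (hcK i hi) (posPart_nonneg _))
    _ ≤ ‖x - v‖ * (K * R) := by
      rw [← mul_sum, mul_comm (K : ℝ), mul_assoc]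
      gcongr
      exact sum_le_sum_of_subset_of_nonneg hts fun i _ _ => posPart_nonneg (⟪a i, x⟫_ℝ - b i)
  rcases (norm_nonneg (x - v)).eq_or_lt with h0 | hpos
  · rw [← h0]
    positivity
  · exact le_of_mul_le_mul_left hsq hpos

/-- Hoffman's error bound. -/
theorem exists_infDist_polyhedron_le_mul_sum_posPart [CompleteSpace E]
    (hne : (polyhedron s a b).Nonempty) :
    ∃ C : NNReal, ∀ x,
      Metric.infDist x (polyhedron s a b) ≤ C * ∑ i ∈ s, (⟪a i, x⟫_ℝ - b i)⁺ := by
  classical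
  have hK (t : Finset ι) : ∃ K : NNReal, LinearIndependent ℝ (fun i : t => a i) →
      ∀ c : t → ℝ, ‖c‖ ≤ K * ‖∑ i, c i • a i‖ := by
    by_cases h : LinearIndependent ℝ (fun i : t => a i)
    · obtain ⟨K, hK⟩ := h.exists_norm_le_mul_norm_sum
      exact ⟨K, fun _ => hK⟩
    · exact ⟨0, fun h' => absurd h' h⟩
  choose K hK using hK
  refine ⟨∑ t ∈ s.powerset, K t, fun x => ?_⟩
  obtain ⟨v, hvP, hv⟩ := exists_norm_eq_iInf_of_complete_convex hne
    isClosed_polyhedron.isComplete convex_polyhedron x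
  have hdist : Metric.infDist x (polyhedron s a b) = ‖x - v‖ := by
    rw [Metric.infDist_eq_iInf, hv]
    simp_rw [dist_eq_norm]
  obtain ⟨t, hts, hli, hxt⟩ := PointedCone.exists_linearIndependent_of_mem_hull_image
    (mem_hull_active_of_forall_inner_sub_le_zero hvP
      ((norm_eq_iInf_iff_real_inner_le_zero convex_polyhedron hvP).1 hv))
  have hts' : t ⊆ s := hts.trans (filter_subset _ _)
  rw [hdist]
  calc ‖x - v‖ ≤ K t * ∑ i ∈ s, (⟪a i, x⟫_ℝ - b i)⁺ :=
        norm_sub_le_mul_sum_posPart (hK t hli) hts' (fun i hi => (mem_filter.1 (hts hi)).2) hxt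
    _ ≤ (∑ t ∈ s.powerset, K t : NNReal) * ∑ i ∈ s, (⟪a i, x⟫_ℝ - b i)⁺ := by
        gcongr
        exact single_le_sum (fun _ _ => zero_le) (mem_powerset.2 hts')

theorem exists_mul_infDist_inter_le_infDist_add [CompleteSpace E] [DecidableEq ι]
    {t : Finset ι} (hne : (polyhedron s a b ∩ polyhedron t a b).Nonempty) :
    ∃ ε > (0 : ℝ), ∀ x, ε * Metric.infDist x (polyhedron s a b ∩ polyhedron t a b) ≤
      Metric.infDist x (polyhedron s a b) + Metric.infDist x (polyhedron t a b) := by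
  obtain ⟨C, hC⟩ := exists_infDist_polyhedron_le_mul_sum_posPart (polyhedron_union s t a b ▸ hne)
  set M := ∑ i ∈ s ∪ t, ‖a i‖
  refine ⟨1 / (C * M + 1), by positivity, fun x => ?_⟩
  have hds := Metric.infDist_nonneg (x := x) (s := polyhedron s a b)
  have hdt := Metric.infDist_nonneg (x := x) (s := polyhedron t a b)
  set d := Metric.infDist x (polyhedron s a b) + Metric.infDist x (polyhedron t a b)
  have hres : ∀ i ∈ s ∪ t, (⟪a i, x⟫_ℝ - b i)⁺ ≤ ‖a i‖ * d := by
    intro i hi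
    rcases mem_union.1 hi with hi | hi
    · refine (posPart_inner_sub_le_norm_mul_infDist (hne.mono Set.inter_subset_left)
        (fun y hy => hy i hi) x).trans ?_
      exact mul_le_mul_of_nonneg_left (by linarith) (norm_nonneg _)
    · refine (posPart_inner_sub_le_norm_mul_infDist (hne.mono Set.inter_subset_right)
        (fun y hy => hy i hi) x).trans ?_
      exact mul_le_mul_of_nonneg_left (by linarith) (norm_nonneg _)
  have hd : Metric.infDist x (polyhedron s a b ∩ polyhedron t a b) ≤ C * M * d := by
    rw [← polyhedron_union, mul_assoc, sum_mul]
    exact (hC x).trans (mul_le_mul_of_nonneg_left (sum_le_sum hres) C.2)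
  rw [div_mul_eq_mul_div, one_mul, div_le_iff₀ (by positivity)]
  nlinarith [Metric.infDist_nonneg (x := x) (s := polyhedron s a b ∩ polyhedron t a b)]

end Polyhedron

theorem polyhedral_regularly_situated_general {n : ℕ}
    (A B : Set (EuclideanSpace ℝ (Fin n)))
    (hA : ∃ s : Finset (EuclideanSpace ℝ (Fin n) × ℝ),
      A = {x | ∀ p ∈ s, (inner ℝ p.1 x : ℝ) ≤ p.2})
    (hB : ∃ s : Finset (EuclideanSpace ℝ (Fin n) × ℝ),
      B = {x | ∀ p ∈ s, (inner ℝ p.1 x : ℝ) ≤ p.2})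
    (hABne : (A ∩ B).Nonempty)
    (Ω : Set (EuclideanSpace ℝ (Fin n))) :
    ∃ ε > (0 : ℝ), ∀ x ∈ Ω,
      ε * Metric.infDist x (A ∩ B) ≤ Metric.infDist x A + Metric.infDist x B := by
  obtain ⟨sa, rfl⟩ := hA
  obtain ⟨sb, rfl⟩ := hB
  obtain ⟨ε, hε, h⟩ := exists_mul_infDist_inter_le_infDist_add (a := Prod.fst) (b := Prod.snd) hABne
  exact ⟨ε, hε, fun x _ => h x⟩

/-- Two nonempty closed convex polyhedral (semilinear) sets `A`, `B` in
ℝⁿ with `A ∩ B ≠ ∅` are regularly situated with exponent 1: on any bounded set `Ω`,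
`dist(x, A) + dist(x, B) ≥ ε · dist(x, A ∩ B)` for some `ε > 0`. -/
theorem polyhedral_regularly_situated {n : ℕ}
    (A B : Set (EuclideanSpace ℝ (Fin n)))
    (hA : ∃ s : Finset (EuclideanSpace ℝ (Fin n) × ℝ),
      A = {x | ∀ p ∈ s, (inner ℝ p.1 x : ℝ) ≤ p.2})
    (hB : ∃ s : Finset (EuclideanSpace ℝ (Fin n) × ℝ),
      B = {x | ∀ p ∈ s, (inner ℝ p.1 x : ℝ) ≤ p.2})
    (hAne : A.Nonempty) (hBne : B.Nonempty) (hABne : (A ∩ B).Nonempty)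
    (Ω : Set (EuclideanSpace ℝ (Fin n))) (hΩ : Bornology.IsBounded Ω) :
    ∃ ε > (0 : ℝ), ∀ x ∈ Ω,
      ε * Metric.infDist x (A ∩ B) ≤ Metric.infDist x A + Metric.infDist x B :=
  polyhedral_regularly_situated_general A B hA hB hABne Ω
end

section
/- Let q > p ≥ 1 with q a power of 2, and recall Wood's theorem that every polynomial map S^q → S^p is constant. Then a continuous map f : Δ → S^p from a d-simplex Δ with d > q can be approximated uniformly by polynomial maps Δ → S^p if and only if f is constant. -/
open MvPolynomial

lemma my_eval_bind₁ {σ τ : Type*} (u : τ → ℝ) (L : σ → MvPolynomial τ ℝ)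
    (P : MvPolynomial σ ℝ) :
    eval u (bind₁ L P) = eval (fun i => eval u (L i)) P := by
  have hae : ∀ (w : τ → ℝ) (P' : MvPolynomial τ ℝ), aeval w P' = eval w P' :=
    fun w P' => RingHom.congr_fun (MvPolynomial.coe_aeval_eq_eval (f := w)) P'
  have hae' : ∀ (w : σ → ℝ) (P' : MvPolynomial σ ℝ), aeval w P' = eval w P' :=
    fun w P' => RingHom.congr_fun (MvPolynomial.coe_aeval_eq_eval (f := w)) P'
  simp only [← hae, ← hae']
  exact MvPolynomial.aeval_bind₁ u L P

lemma my_abs_coord_le {m : ℕ} (u : EuclideanSpace ℝ (Fin m)) (i : Fin m) :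
    |u i| ≤ ‖u‖ := by
  have h := abs_real_inner_le_norm (EuclideanSpace.single i (1 : ℝ)) u
  simpa [EuclideanSpace.inner_single_left] using h

/-- Assuming Wood's theorem (every polynomial map `S^q → S^p` is
constant for `q` a power of `2`, `q > p`), a continuous map `f : Δ → S^p` from a
`d`-simplex with `d > q > p ≥ 1` can be uniformly approximated by polynomial maps
`Δ → S^p` if and only if `f` is constant. -/
theorem polynomial_approx_iff_constant {n d p q : ℕ}
    (hp : 1 ≤ p) (hpq : p < q) (hq2 : ∃ r : ℕ, q = 2 ^ r) (hqd : q < d)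
    (wood : ∀ g : EuclideanSpace ℝ (Fin (q + 1)) → EuclideanSpace ℝ (Fin (p + 1)),
      (∀ j, ∃ P : MvPolynomial (Fin (q + 1)) ℝ, ∀ x, g x j =
        MvPolynomial.eval (fun i => x i) P) →
      g '' Metric.sphere 0 1 ⊆ Metric.sphere 0 1 →
      ∃ c, ∀ x ∈ Metric.sphere (0 : EuclideanSpace ℝ (Fin (q + 1))) 1, g x = c)
    (v : Fin (d + 1) → EuclideanSpace ℝ (Fin n)) (hv : AffineIndependent ℝ v)
    (Δ : Set (EuclideanSpace ℝ (Fin n))) (hΔ : Δ = convexHull ℝ (Set.range v))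
    (f : EuclideanSpace ℝ (Fin n) → EuclideanSpace ℝ (Fin (p + 1)))
    (hf : ContinuousOn f Δ) (hfS : f '' Δ ⊆ Metric.sphere 0 1) :
    (∀ ε > (0 : ℝ), ∃ g : EuclideanSpace ℝ (Fin n) → EuclideanSpace ℝ (Fin (p + 1)),
        (∀ j, ∃ P : MvPolynomial (Fin n) ℝ, ∀ x, g x j =
          MvPolynomial.eval (fun i => x i) P) ∧
        g '' Δ ⊆ Metric.sphere 0 1 ∧
        ∀ x ∈ Δ, ‖g x - f x‖ < ε) ↔
      ∃ c, ∀ x ∈ Δ, f x = c := by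
  have hconv : Convex ℝ Δ := hΔ ▸ convex_convexHull ℝ _
  constructor
  · intro happrox
    -- key claim: for any x y ∈ Δ, f x = f y
    have key : ∀ x ∈ Δ, ∀ y ∈ Δ, f x = f y := by
      intro x hx y hy
      by_contra hne
      set ε : ℝ := ‖f x - f y‖ / 2 with hε
      have hεpos : 0 < ε := by
        have h0 : (0:ℝ) < ‖f x - f y‖ := norm_pos_iff.mpr (sub_ne_zero_of_ne hne)
        rw [hε]; linarith
      obtain ⟨g, hgpoly, hgS, hgclose⟩ := happrox ε hεpos
      -- affine map φ from the q-sphere onto the segment [x, y]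
      set φ : EuclideanSpace ℝ (Fin (q + 1)) → EuclideanSpace ℝ (Fin n) :=
        fun u => ((1 - u 0) / 2) • x + ((1 + u 0) / 2) • y with hφ
      have hφmem : ∀ u ∈ Metric.sphere (0 : EuclideanSpace ℝ (Fin (q + 1))) 1,
          φ u ∈ Δ := by
        intro u hu
        have hnorm : ‖u‖ = 1 := by simpa using hu
        have habs : |u 0| ≤ 1 := by
          have h := my_abs_coord_le u 0
          rwa [hnorm] at h
        rw [abs_le] at habs
        show ((1 - u 0) / 2) • x + ((1 + u 0) / 2) • y ∈ Δ
        exact hconv hx hy (by linarith [habs.2]) (by linarith [habs.1]) (by ring)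
      -- the composition g ∘ φ is a polynomial map
      set L : Fin n → MvPolynomial (Fin (q + 1)) ℝ :=
        fun i => C ((x i + y i) / 2) + C ((y i - x i) / 2) * X 0 with hL
      have hφcoord : ∀ u i, φ u i = eval (fun j => u j) (L i) := by
        intro u i
        simp only [hφ, hL, PiLp.add_apply, PiLp.smul_apply, smul_eq_mul,
          map_add, map_mul, eval_C, eval_X]
        ring
      have hGpoly : ∀ j, ∃ P : MvPolynomial (Fin (q + 1)) ℝ,
          ∀ u : EuclideanSpace ℝ (Fin (q + 1)), (g ∘ φ) u j =
            eval (fun i => u i) P := by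
        intro j
        obtain ⟨P, hP⟩ := hgpoly j
        refine ⟨bind₁ L P, fun u => ?_⟩
        rw [Function.comp_apply, hP, my_eval_bind₁]
        have he : (fun i => φ u i) = fun i => eval (fun j => u j) (L i) :=
          funext fun i => hφcoord u i
        rw [he]
      have hGS : (g ∘ φ) '' Metric.sphere 0 1 ⊆ Metric.sphere 0 1 := by
        rintro _ ⟨u, hu, rfl⟩
        exact hgS ⟨φ u, hφmem u hu, rfl⟩
      obtain ⟨c, hc⟩ := wood (g ∘ φ) hGpoly hGS
      -- evaluate at ±e₀
      have he : ∀ s : ℝ, |s| = 1 →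
          EuclideanSpace.single (0 : Fin (q + 1)) s ∈
            Metric.sphere (0 : EuclideanSpace ℝ (Fin (q + 1))) 1 := by
        intro s hs
        simp [EuclideanSpace.norm_single, hs]
      have h1 : φ (EuclideanSpace.single 0 (1 : ℝ)) = y := by
        simp only [hφ, EuclideanSpace.single_apply, if_pos rfl]
        norm_num
      have h2 : φ (EuclideanSpace.single 0 (-1 : ℝ)) = x := by
        simp only [hφ, EuclideanSpace.single_apply, if_pos rfl]
        norm_num
      have hgy : g y = c := by
        have := hc _ (he 1 (by norm_num)); rwa [Function.comp_apply, h1] at this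
      have hgx : g x = c := by
        have := hc _ (he (-1) (by norm_num)); rwa [Function.comp_apply, h2] at this
      have hxy : g x = g y := by rw [hgx, hgy]
      have hfx := hgclose x hx
      have hfy := hgclose y hy
      have : ‖f x - f y‖ < 2 * ε := by
        calc ‖f x - f y‖ = ‖(f x - g x) + (g y - f y)‖ := by rw [hxy]; abel_nf
          _ ≤ ‖f x - g x‖ + ‖g y - f y‖ := norm_add_le _ _
          _ < ε + ε := add_lt_add (by rw [norm_sub_rev]; exact hfx) hfy
          _ = 2 * ε := by ring
      rw [hε] at this
      linarith
    have hv0 : v 0 ∈ Δ := by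
      rw [hΔ]; exact subset_convexHull ℝ _ ⟨0, rfl⟩
    exact ⟨f (v 0), fun x hx => key x hx (v 0) hv0⟩
  · rintro ⟨c, hc⟩ ε hεpos
    refine ⟨fun _ => c, fun j => ⟨C (c j), fun x => by simp⟩, ?_, ?_⟩
    · rintro _ ⟨z, hz, rfl⟩
      have : f z ∈ Metric.sphere (0 : EuclideanSpace ℝ (Fin (p + 1))) 1 :=
        hfS ⟨z, hz, rfl⟩
      rwa [hc z hz] at this
    · intro z hz
      rw [hc z hz]
      simpa using hεpos
end
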